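/- arXiv:math/0509079 — 3 statements merged into one kernel-verified Lean document; each statement's English description precedes it below -/
import Mathlib

section
/- Let x_1, …, x_k be pairwise distinct complex numbers of modulus 1, none equal to ±1, such that x_i ≠ x_j and x_i ≠ x_j^{-1} for i ≠ j. Suppose b_1, …, b_k are real numbers satisfying ∑_{i=1}^k b_i x_i^e = 0 for all e = 1, …, k−1. Then b_1 = b_2 = ⋯ = b_k. -/
open Polynomial Finset in
/-- Auxiliary Lagrange/Vandermonde identity: if `∑ cᵢ xᵢᵉ = 0` for `e = 1,…,k-1`, then
for each `l`, `c l * ∏_{m≠l} (x l - x m) = (∏_{m≠l} (-x m)) * ∑ c`. -/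
theorem stmt2_aux (k : ℕ) (x : Fin k → ℂ) (c : Fin k → ℂ)
    (heq : ∀ e : ℕ, 1 ≤ e → e ≤ k - 1 → ∑ i, c i * x i ^ e = 0) (l : Fin k) :
    c l * ∏ m ∈ Finset.univ.erase l, (x l - x m) =
      (∏ m ∈ Finset.univ.erase l, (-x m)) * ∑ i, c i := by
  classical
  set Q : ℂ[X] := ∏ m ∈ Finset.univ.erase l, (X - C (x m)) with hQ
  have hk : 0 < k := l.pos
  have hQdeg : Q.natDegree = k - 1 := by
    rw [hQ, natDegree_prod_of_monic _ _ (fun m _ => monic_X_sub_C (x m))]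
    simp [Finset.card_erase_of_mem]
  have hQdeg' : Q.natDegree < k := by omega
  have hev : ∀ z : ℂ, Q.eval z = ∑ j ∈ range k, Q.coeff j * z ^ j :=
    fun z => eval_eq_sum_range' hQdeg' z
  have hzero : ∀ i : Fin k, i ≠ l → Q.eval (x i) = 0 := by
    intro i hi
    rw [hQ, eval_prod]
    refine Finset.prod_eq_zero (Finset.mem_erase.2 ⟨hi, Finset.mem_univ i⟩) ?_
    simp
  have h1 : ∑ i, c i * Q.eval (x i) = c l * Q.eval (x l) := by
    refine Finset.sum_eq_single l (fun i _ hi => ?_) (by simp)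
    rw [hzero i hi, mul_zero]
  have h2 : ∑ i, c i * Q.eval (x i) = Q.coeff 0 * ∑ i, c i := by
    calc ∑ i, c i * Q.eval (x i)
        = ∑ i, ∑ j ∈ range k, Q.coeff j * (c i * x i ^ j) := by
          refine Finset.sum_congr rfl fun i _ => ?_
          rw [hev (x i), Finset.mul_sum]
          exact Finset.sum_congr rfl fun j _ => by ring
      _ = ∑ j ∈ range k, Q.coeff j * ∑ i, c i * x i ^ j := by
          rw [Finset.sum_comm]
          exact Finset.sum_congr rfl fun j _ => by rw [Finset.mul_sum]
      _ = Q.coeff 0 * ∑ i, c i := by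
          rw [← Finset.add_sum_erase _ _ (Finset.mem_range.2 hk)]
          have hz : ∑ j ∈ (range k).erase 0, Q.coeff j * ∑ i, c i * x i ^ j = 0 := by
            refine Finset.sum_eq_zero fun j hj => ?_
            obtain ⟨hj0, hjk⟩ := Finset.mem_erase.1 hj
            rw [heq j (Nat.one_le_iff_ne_zero.2 hj0)
              (by have := Finset.mem_range.1 hjk; omega), mul_zero]
          rw [hz, add_zero]
          simp
  have hc0 : Q.coeff 0 = ∏ m ∈ Finset.univ.erase l, (-x m) := by
    rw [coeff_zero_eq_eval_zero, hQ, eval_prod]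
    exact Finset.prod_congr rfl fun m _ => by simp
  have hql : Q.eval (x l) = ∏ m ∈ Finset.univ.erase l, (x l - x m) := by
    rw [hQ, eval_prod]
    exact Finset.prod_congr rfl fun m _ => by simp
  rw [← hql, ← hc0, ← h1, h2]

open Polynomial Finset in
/-- Vandermonde-type argument (from the proof of Prop. 4.1): if `x₁,…,x_k` lie on the
unit circle, are distinct, none equal to `±1`, with `xᵢ ≠ xⱼ⁻¹` for `i ≠ j`, and real
numbers `bᵢ` satisfy `∑ bᵢ xᵢᵉ = 0` for `e = 1,…,k-1`, then all `bᵢ` are equal. -/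
theorem stmt2 (k : ℕ) (hk : 0 < k) (x : Fin k → ℂ) (b : Fin k → ℝ)
    (hmod : ∀ i, ‖x i‖ = 1)
    (hpm : ∀ i, x i ≠ 1 ∧ x i ≠ -1)
    (hdist : ∀ i j, i ≠ j → x i ≠ x j ∧ x i ≠ (x j)⁻¹)
    (heq : ∀ e : ℕ, 1 ≤ e → e ≤ k - 1 → ∑ i, (b i : ℂ) * x i ^ e = 0) :
    ∀ i j, b i = b j := by
  classical
  have hx0 : ∀ i, x i ≠ 0 := by
    intro i h
    have := hmod i
    rw [h] at this
    simp at this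
  have hconj : ∀ i, (starRingEnd ℂ) (x i) = (x i)⁻¹ := by
    intro i
    rw [Complex.inv_def, Complex.normSq_eq_norm_sq, hmod i]
    simp
  have hinj : Function.Injective x := fun i j hij => by
    by_contra h
    exact (hdist i j h).1 hij
  set S : ℂ := ∑ i, (b i : ℂ) with hS
  set D : Fin k → ℂ := fun l => ∏ m ∈ Finset.univ.erase l, (x l - x m) with hD
  have hD0 : ∀ l, D l ≠ 0 := by
    intro l
    refine Finset.prod_ne_zero_iff.2 fun m hm => ?_
    have hml : l ≠ m := fun h => (Finset.mem_erase.1 hm).1 h.symm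
    exact sub_ne_zero.2 fun h => hml (hinj h)
  have E1 : ∀ l, (b l : ℂ) * D l = (∏ m ∈ Finset.univ.erase l, (-x m)) * S :=
    fun l => stmt2_aux k x (fun i => (b i : ℂ)) heq l
  have hSconj : (starRingEnd ℂ) S = S := by
    rw [hS, map_sum]
    exact Finset.sum_congr rfl fun i _ => Complex.conj_ofReal _
  -- E2 : the conjugated identity, rewritten using `x̄ = x⁻¹`
  have E2 : ∀ l, (b l : ℂ) * D l = x l ^ (k - 1) * S := by
    intro l
    obtain ⟨W, hWdef⟩ : ∃ W, ∏ m ∈ Finset.univ.erase l, (-(x m)⁻¹) = W := ⟨_, rfl⟩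
    have hWne : W ≠ 0 := by
      rw [← hWdef]
      exact Finset.prod_ne_zero_iff.2 fun m _ => by simp [hx0 m]
    have hc := congrArg (starRingEnd ℂ) (E1 l)
    rw [map_mul, map_mul, hSconj, Complex.conj_ofReal, map_prod, map_prod] at hc
    have hNconj : ∏ m ∈ Finset.univ.erase l, (starRingEnd ℂ) (-x m) = W := by
      rw [← hWdef]
      exact Finset.prod_congr rfl fun m _ => by rw [map_neg, hconj]
    rw [hNconj] at hc
    have hcD : (∏ m ∈ Finset.univ.erase l, (starRingEnd ℂ) (x l - x m))
        = D l * W * ((x l)⁻¹) ^ (k - 1) := by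
      calc (∏ m ∈ Finset.univ.erase l, (starRingEnd ℂ) (x l - x m))
          = ∏ m ∈ Finset.univ.erase l, ((x l)⁻¹ - (x m)⁻¹) :=
            Finset.prod_congr rfl fun m _ => by rw [map_sub, hconj, hconj]
        _ = ∏ m ∈ Finset.univ.erase l, ((x l - x m) * (-(x m)⁻¹) * (x l)⁻¹) := by
            refine Finset.prod_congr rfl fun m _ => ?_
            have h1 : x l * (x l)⁻¹ = 1 := mul_inv_cancel₀ (hx0 l)
            have h2 : x m * (x m)⁻¹ = 1 := mul_inv_cancel₀ (hx0 m)
            linear_combination (x m)⁻¹ * h1 - (x l)⁻¹ * h2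
        _ = D l * W * ((x l)⁻¹) ^ (k - 1) := by
            rw [Finset.prod_mul_distrib, Finset.prod_mul_distrib, Finset.prod_const,
              Finset.card_erase_of_mem (Finset.mem_univ l), Finset.card_univ,
              Fintype.card_fin, hWdef, hD]
    rw [hcD] at hc
    -- hc : ↑(b l) * (D l * W * ((x l)⁻¹) ^ (k-1)) = W * S
    have ht : ((x l)⁻¹) ^ (k - 1) * (x l) ^ (k - 1) = 1 := by
      rw [← mul_pow, inv_mul_cancel₀ (hx0 l), one_pow]
    refine mul_right_cancel₀ hWne ?_
    linear_combination (x l) ^ (k - 1) * hc - ((b l : ℂ) * D l * W) * ht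
  by_cases hS0 : S = 0
  · -- all bᵢ = 0
    have hb0 : ∀ i, b i = 0 := by
      intro i
      have h := E2 i
      rw [hS0, mul_zero] at h
      have : (b i : ℂ) = 0 := by
        rcases mul_eq_zero.1 h with h' | h'
        · exact h'
        · exact absurd h' (hD0 i)
      exact_mod_cast this
    intro i j
    rw [hb0 i, hb0 j]
  · -- x l ^ k is constant, so the x l are all k-th roots of μ
    set μ : ℂ := (-1 : ℂ) ^ (k - 1) * ∏ m, x m with hμ
    have hxk : ∀ l, x l ^ k = μ := by
      intro l
      have hNl : (∏ m ∈ Finset.univ.erase l, (-x m)) = x l ^ (k - 1) :=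
        mul_right_cancel₀ hS0 ((E1 l).symm.trans (E2 l))
      have hkk : k - 1 + 1 = k := by omega
      have hprodneg : (∏ m ∈ Finset.univ.erase l, (-x m))
          = (-1 : ℂ) ^ (k - 1) * ∏ m ∈ Finset.univ.erase l, x m := by
        calc (∏ m ∈ Finset.univ.erase l, (-x m))
            = ∏ m ∈ Finset.univ.erase l, ((-1 : ℂ) * x m) := by
              exact Finset.prod_congr rfl fun m _ => by ring
          _ = (∏ m ∈ Finset.univ.erase l, (-1 : ℂ)) * ∏ m ∈ Finset.univ.erase l, x m :=
              Finset.prod_mul_distrib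
          _ = (-1 : ℂ) ^ (k - 1) * ∏ m ∈ Finset.univ.erase l, x m := by
              rw [Finset.prod_const, Finset.card_erase_of_mem (Finset.mem_univ l),
                Finset.card_univ, Fintype.card_fin]
      calc x l ^ k = x l ^ (k - 1) * x l := by rw [← pow_succ, hkk]
        _ = (∏ m ∈ Finset.univ.erase l, (-x m)) * x l := by rw [hNl]
        _ = (-1 : ℂ) ^ (k - 1) * (x l * ∏ m ∈ Finset.univ.erase l, x m) := by
            rw [hprodneg]; ring
        _ = μ := by rw [Finset.mul_prod_erase _ _ (Finset.mem_univ l), hμ]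
    -- the polynomial identity ∏ (X - x i) = X^k - μ
    set P : ℂ[X] := ∏ i, (X - C (x i)) with hP
    have hPmon : P.Monic := monic_prod_of_monic _ _ fun i _ => monic_X_sub_C (x i)
    have hPdeg : P.natDegree = k := by
      rw [hP, natDegree_prod_of_monic _ _ (fun i _ => monic_X_sub_C (x i))]
      simp
    have hRmon : (X ^ k - C μ).Monic := monic_X_pow_sub_C μ hk.ne'
    have hRdeg : (X ^ k - C μ).natDegree = k := natDegree_X_pow_sub_C
    have hPR : P = X ^ k - C μ := by
      rw [← sub_eq_zero]
      refine eq_zero_of_natDegree_lt_card_of_eval_eq_zero _ hinj (fun i => ?_) ?_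
      · rw [eval_sub, eval_sub, eval_pow, eval_X, eval_C, hxk i, sub_self, sub_zero, hP,
          eval_prod]
        exact Finset.prod_eq_zero (Finset.mem_univ i) (by simp)
      · rw [Fintype.card_fin]
        by_cases h0 : P - (X ^ k - C μ) = 0
        · rw [h0]; simpa using hk
        · have hdlt : (P - (X ^ k - C μ)).degree < P.degree := by
            refine degree_sub_lt ?_ hPmon.ne_zero (by rw [hPmon.leadingCoeff, hRmon.leadingCoeff])
            rw [degree_eq_natDegree hPmon.ne_zero, degree_eq_natDegree hRmon.ne_zero,
              hPdeg, hRdeg]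
          have := (natDegree_lt_iff_degree_lt h0).2
            (hdlt.trans_le (by rw [degree_eq_natDegree hPmon.ne_zero, hPdeg]))
          exact this
    -- D l = k * x l ^ (k-1)
    have hDl : ∀ l, D l = (k : ℂ) * x l ^ (k - 1) := by
      intro l
      have hmem : x l ∈ Multiset.map x Finset.univ.val :=
        Multiset.mem_map_of_mem x (Finset.mem_univ l)
      have hder := eval_multiset_prod_X_sub_C_derivative (S := Multiset.map x Finset.univ.val)
        (r := x l) hmem
      have hPmul : (Multiset.map (fun a => X - C a) (Multiset.map x Finset.univ.val)).prod
          = P := by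
        rw [Multiset.map_map, hP, Finset.prod_eq_multiset_prod]
        rfl
      have hmerase : (Multiset.map x Finset.univ.val).erase (x l)
          = Multiset.map x ((Finset.univ.erase l).val) := by
        rw [Finset.erase_val]
        have huniv : (Finset.univ : Finset (Fin k)).val
            = l ::ₘ (Finset.univ : Finset (Fin k)).val.erase l :=
          (Multiset.cons_erase (Finset.mem_univ l : l ∈ Finset.univ)).symm
        calc (Multiset.map x Finset.univ.val).erase (x l)
            = (Multiset.map x (l ::ₘ Finset.univ.val.erase l)).erase (x l) := by
              rw [← huniv]
          _ = (x l ::ₘ Multiset.map x (Finset.univ.val.erase l)).erase (x l) := by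
              rw [Multiset.map_cons]
          _ = Multiset.map x (Finset.univ.val.erase l) := Multiset.erase_cons_head _ _
      rw [hPmul, hmerase] at hder
      have hDval : (Multiset.map (fun a => x l - a) (Multiset.map x (Finset.univ.erase l).val)).prod
          = D l := by
        rw [Multiset.map_map]
        show (Multiset.map ((fun a => x l - a) ∘ x) (Finset.univ.erase l).val).prod
          = ∏ m ∈ Finset.univ.erase l, (x l - x m)
        rw [Finset.prod_eq_multiset_prod]
        rfl
      rw [hDval] at hder
      rw [← hder, hPR]
      rw [derivative_sub, derivative_C, sub_zero, derivative_X_pow]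
      simp
    -- conclude
    have hbl : ∀ l, (b l : ℂ) * (k : ℂ) = S := by
      intro l
      have h := E2 l
      rw [hDl l] at h
      have hxne : x l ^ (k - 1) ≠ 0 := pow_ne_zero _ (hx0 l)
      refine mul_right_cancel₀ hxne ?_
      linear_combination h
    intro i j
    have hkc : (k : ℂ) ≠ 0 := Nat.cast_ne_zero.2 hk.ne'
    have : (b i : ℂ) = (b j : ℂ) := mul_right_cancel₀ hkc ((hbl i).trans (hbl j).symm)
    exact_mod_cast this
end

section
/- Let G be the abelian group with generators η_1, …, η_{g+1} and relations (m_i k)·η_i − (m_{g+1} k)·η_{g+1} = 0 for i = 1, …, g+1 and ∑_{i=1}^{g+1} η_i = 0, where m_1, …, m_{g+1}, k are positive integers. Then the order of the element s = (m_{g+1} k)·η_{g+1} in G equals ∑_{i=1}^{g+1} (m / m_i), where m = lcm(m_1, …, m_{g+1}). -/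
/-!
In the group, `s = (mᵢk)•ηᵢ` for every `i`, so `(m/mᵢ)•s = (mk)•ηᵢ`; summing over `i` and
using `∑ ηᵢ = 0` gives `N•s = 0` for `N = ∑ m/mᵢ`. Conversely the numbers `m/mᵢ` have gcd 1
(for a common divisor `d`, `m/d` is a common multiple of the `mᵢ`), so Bézout gives
`∑ aᵢ (m/mᵢ) = 1`. Then `ηᵢ ↦ (1 - N aᵢ)(m/mᵢ)` respects both relations in `ℤ/(N·m·k)`,
and it sends `s` to `m·k`, an element of order `N`.
-/

open Finset

lemma Finset.eq_one_of_forall_dvd_lcm_div {ι : Type*} {s : Finset ι} (hs : s.Nonempty)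
    {m : ι → ℕ} (hm : ∀ i ∈ s, 0 < m i) {d : ℕ} (hd : ∀ i ∈ s, d ∣ s.lcm m / m i) : d = 1 := by
  set L := s.lcm m
  have hmL : ∀ i ∈ s, m i ∣ L := fun i hi => dvd_lcm hi
  have hL : L ≠ 0 := by
    rw [Ne, lcm_eq_zero_iff]
    rintro ⟨i, hi, h0⟩
    exact (hm i hi).ne' h0
  obtain ⟨i₀, hi₀⟩ := hs
  have hdL : d ∣ L := (hd i₀ hi₀).trans (Nat.div_dvd_of_dvd (hmL i₀ hi₀))
  have hd0 : d ≠ 0 := by rintro rfl; exact hL (zero_dvd_iff.mp hdL)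
  have hLdiv : L ∣ L / d := lcm_dvd fun i hi => by
    rw [Nat.dvd_div_iff_mul_dvd hdL, mul_comm]
    exact Nat.mul_dvd_of_dvd_div (hmL i hi) (hd i hi)
  have hpos : 0 < L / d := Nat.div_pos (Nat.le_of_dvd (Nat.pos_of_ne_zero hL) hdL)
    (Nat.pos_of_ne_zero hd0)
  have hself : L / d = L := le_antisymm (Nat.div_le_self L d) (Nat.le_of_dvd hpos hLdiv)
  exact (Nat.div_eq_self.mp hself).resolve_left hL

lemma Finset.exists_sum_mul_lcm_div_eq_one {ι : Type*} {s : Finset ι} (hs : s.Nonempty)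
    {m : ι → ℕ} (hm : ∀ i ∈ s, 0 < m i) :
    ∃ a : ι → ℤ, ∑ i ∈ s, ((s.lcm m / m i : ℕ) : ℤ) * a i = 1 := by
  obtain ⟨a, ha⟩ := s.gcd_eq_sum_mul fun i => ((s.lcm m / m i : ℕ) : ℤ)
  refine ⟨a, ha ▸ ?_⟩
  have hnatAbs : (s.gcd fun i => ((s.lcm m / m i : ℕ) : ℤ)).natAbs = 1 :=
    eq_one_of_forall_dvd_lcm_div hs hm fun i hi => by
      have h := Int.natAbs_dvd_natAbs.mpr
        (gcd_dvd (f := fun i => ((s.lcm m / m i : ℕ) : ℤ)) hi)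
      rwa [Int.natAbs_natCast] at h
  have hnonneg := Int.finsetGcd_nonneg (s := s) (f := fun i => ((s.lcm m / m i : ℕ) : ℤ))
  omega

lemma ZMod.addOrderOf_natCast_mul_left {a : ℕ} (ha : a ≠ 0) (n : ℕ) :
    addOrderOf (a : ZMod (n * a)) = n := by
  rw [ZMod.addOrderOf_coe' _ ha, Nat.gcd_mul_left_left,
    Nat.mul_div_cancel _ (Nat.pos_of_ne_zero ha)]

section

variable {ι : Type*} [Fintype ι]

lemma sum_lcm_div_nsmul_eq_zero {A : Type*} [AddCommMonoid A] {m : ι → ℕ} {Y : ι → A} {c : A}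
    (hY : ∀ i, m i • Y i = c) (hsum : ∑ i, Y i = 0) : (∑ i, univ.lcm m / m i) • c = 0 :=
  calc (∑ i, univ.lcm m / m i) • c = ∑ i, (univ.lcm m / m i) • m i • Y i := by
        simp only [sum_smul, hY]
    _ = ∑ i, univ.lcm m • Y i := sum_congr rfl fun i _ => by
        rw [smul_smul, Nat.div_mul_cancel (dvd_lcm (mem_univ i))]
    _ = 0 := by rw [← smul_sum, hsum, smul_zero]

lemma exists_zmod_nsmul_eq_and_sum_eq_zero [Nonempty ι] {m : ι → ℕ} (hm : ∀ i, 0 < m i) (k : ℕ) :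
    ∃ X : ι → ZMod ((∑ i, univ.lcm m / m i) * (univ.lcm m * k)),
      (∀ i, (m i * k) • X i = ((univ.lcm m * k : ℕ) : ZMod _)) ∧ ∑ i, X i = 0 := by
  obtain ⟨a, ha⟩ := exists_sum_mul_lcm_div_eq_one univ_nonempty fun i _ => hm i
  set L := univ.lcm m
  set N := ∑ i, L / m i with hN
  have hdm : ∀ i, ((L / m i : ℕ) : ℤ) * m i = L := fun i => by
    exact_mod_cast Nat.div_mul_cancel (dvd_lcm (mem_univ i))
  refine ⟨fun i => ((((L / m i : ℕ) : ℤ) * (1 - N * a i) : ℤ) : ZMod (N * (L * k))),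
    fun i => ?_, ?_⟩
  · have hcoeff : ((m i * k : ℕ) : ℤ) * (((L / m i : ℕ) : ℤ) * (1 - N * a i)) =
        ((L * k : ℕ) : ℤ) - ((N * (L * k) : ℕ) : ℤ) * a i := by
      simp only [Nat.cast_mul]
      linear_combination (k * (1 - N * a i) : ℤ) * hdm i
    rw [nsmul_eq_mul, ← Int.cast_natCast, ← Int.cast_mul, hcoeff, Int.cast_sub, Int.cast_mul,
      Int.cast_natCast, Int.cast_natCast, ZMod.natCast_self, zero_mul, sub_zero]
  · have hNZ : (N : ℤ) = ∑ i, ((L / m i : ℕ) : ℤ) := by rw [hN, Nat.cast_sum]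
    have hsum : ∑ i, ((L / m i : ℕ) : ℤ) * (1 - N * a i) = 0 :=
      calc ∑ i, ((L / m i : ℕ) : ℤ) * (1 - N * a i)
          = ∑ i, ((L / m i : ℕ) : ℤ) - N * ∑ i, ((L / m i : ℕ) : ℤ) * a i := by
            rw [mul_sum, ← sum_sub_distrib]
            exact sum_congr rfl fun i _ => by ring
        _ = 0 := by rw [ha, ← hNZ, mul_one, sub_self]
    rw [← Int.cast_sum, hsum, Int.cast_zero]

end

section

variable {ι : Type*} [DecidableEq ι]

abbrev componentRelations (m : ι → ℕ) (k : ℕ) (ℓ : ι) : Submodule ℤ (ι → ℤ) :=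
  Submodule.span ℤ
    ({v | ∃ i : ι, v = ((m i * k : ℕ) : ℤ) • Pi.single i (1 : ℤ) -
        ((m ℓ * k : ℕ) : ℤ) • Pi.single ℓ (1 : ℤ)} ∪ {fun _ => (1 : ℤ)})

variable (m : ι → ℕ) (k : ℕ) (ℓ : ι)

lemma nsmul_mk_single_eq (i : ι) :
    (m i * k) • (Submodule.Quotient.mk (Pi.single i 1) : (ι → ℤ) ⧸ componentRelations m k ℓ) =
      Submodule.Quotient.mk (((m ℓ * k : ℕ) : ℤ) • Pi.single ℓ (1 : ℤ)) := by
  rw [← natCast_zsmul, ← Submodule.Quotient.mk_smul, Submodule.Quotient.eq]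
  exact Submodule.subset_span (Or.inl ⟨i, rfl⟩)

lemma sum_mk_single_eq_zero [Fintype ι] :
    ∑ i, (Submodule.Quotient.mk (Pi.single i 1) : (ι → ℤ) ⧸ componentRelations m k ℓ) = 0 := by
  simp_rw [← Submodule.mkQ_apply, ← map_sum, univ_sum_single, Submodule.mkQ_apply,
    Submodule.Quotient.mk_eq_zero]
  exact Submodule.subset_span (Or.inr rfl)

lemma addOrderOf_dvd_addOrderOf_mk [Fintype ι] {A : Type*} [AddCommGroup A] {X : ι → A} {c : A}
    (hX : ∀ i, (m i * k) • X i = c) (hsum : ∑ i, X i = 0) :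
    addOrderOf c ∣ addOrderOf (Submodule.Quotient.mk (((m ℓ * k : ℕ) : ℤ) • Pi.single ℓ (1 : ℤ)) :
      (ι → ℤ) ⧸ componentRelations m k ℓ) := by
  set f := Fintype.linearCombination ℤ X
  have hker : componentRelations m k ℓ ≤ LinearMap.ker f := by
    refine Submodule.span_le.mpr ?_
    rintro v (⟨i, rfl⟩ | rfl)
    · rw [SetLike.mem_coe, LinearMap.mem_ker, map_sub, map_zsmul, map_zsmul,
        Fintype.linearCombination_apply_single, Fintype.linearCombination_apply_single,
        one_smul, one_smul, natCast_zsmul, natCast_zsmul, hX, hX, sub_self]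
    · simp only [SetLike.mem_coe, LinearMap.mem_ker,
        Fintype.linearCombination_apply, one_smul, hsum, f]
  have hmap : (componentRelations m k ℓ).liftQ f hker
      (Submodule.Quotient.mk (((m ℓ * k : ℕ) : ℤ) • Pi.single ℓ (1 : ℤ))) = c := by
    rw [Submodule.liftQ_apply, map_zsmul, Fintype.linearCombination_apply_single, one_smul,
      natCast_zsmul, hX]
  exact hmap ▸ addOrderOf_map_dvd ((componentRelations m k ℓ).liftQ f hker).toAddMonoidHom _

end

/-- Group-theoretic core of Theorem 2.5 (case a = b = 0): in the abelian group with
generators `η₁,…,η_{g+1}` and relations `(mᵢk)ηᵢ − (m_{g+1}k)η_{g+1} = 0` and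
`∑ ηᵢ = 0`, the element `s = (m_{g+1}k)η_{g+1}` has order `∑ᵢ m/mᵢ` with
`m = lcm(m₁,…,m_{g+1})`. -/
theorem stmt8 (g k : ℕ) (hk : 0 < k) (m : Fin (g + 1) → ℕ) (hm : ∀ i, 0 < m i) :
    addOrderOf
      ((Submodule.Quotient.mk
          (((m (Fin.last g) * k : ℕ) : ℤ) • Pi.single (Fin.last g) (1 : ℤ))) :
        (Fin (g + 1) → ℤ) ⧸
          Submodule.span ℤ
            ({v | ∃ i : Fin (g + 1),
                v = ((m i * k : ℕ) : ℤ) • Pi.single i (1 : ℤ) -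
                    ((m (Fin.last g) * k : ℕ) : ℤ) • Pi.single (Fin.last g) (1 : ℤ)} ∪
              {fun _ => (1 : ℤ)})) =
      ∑ i : Fin (g + 1), Finset.univ.lcm m / m i := by
  apply Nat.dvd_antisymm
  · refine addOrderOf_dvd_of_nsmul_eq_zero (sum_lcm_div_nsmul_eq_zero
      (Y := fun i => k • Submodule.Quotient.mk (Pi.single i 1)) (fun i => ?_) ?_)
    · rw [smul_smul]
      exact nsmul_mk_single_eq m k (Fin.last g) i
    · rw [← smul_sum, sum_mk_single_eq_zero m k (Fin.last g), smul_zero]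
  · have hLk : univ.lcm m * k ≠ 0 :=
      mul_ne_zero (lcm_ne_zero_iff.mpr fun i _ => (hm i).ne') hk.ne'
    obtain ⟨X, hX, hsum⟩ := exists_zmod_nsmul_eq_and_sum_eq_zero hm k
    simpa only [ZMod.addOrderOf_natCast_mul_left hLk] using
      addOrderOf_dvd_addOrderOf_mk m k (Fin.last g) hX hsum
end

section
/- Let m_1, …, m_n, k be positive integers and m = lcm(m_1, …, m_n). In the abelian group H = ⊕_{i=1}^n Z·η_i / ⟨(m_i k)η_i − (m_n k)η_n : i = 1,…,n⟩, suppose that N·(m_n k)·η_n = 0 in the further quotient H/⟨∑_{i=1}^n η_i⟩; then ∑_{i=1}^n (m/m_i) divides N. -/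
theorem bezout_finset {ι : Type*} [DecidableEq ι] (s : Finset ι) (f : ι → ℕ) :
    ∃ t : ι → ℤ, ∑ i ∈ s, t i * (f i : ℤ) = ((s.gcd f : ℕ) : ℤ) := by
  classical
  induction s using Finset.induction with
  | empty => exact ⟨0, by simp⟩
  | @insert b s hb ih =>
      obtain ⟨t, ht⟩ := ih
      set A := Nat.gcdA (f b) (s.gcd f)
      set B := Nat.gcdB (f b) (s.gcd f)
      refine ⟨fun i => if i = b then A else B * t i, ?_⟩
      rw [Finset.sum_insert hb, Finset.gcd_insert]
      have h1 : GCDMonoid.gcd (f b) (s.gcd f) = Nat.gcd (f b) (s.gcd f) := rfl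
      have h2 : ∑ i ∈ s, (if i = b then A else B * t i) * (f i : ℤ)
          = B * ∑ i ∈ s, t i * (f i : ℤ) := by
        rw [Finset.mul_sum]
        refine Finset.sum_congr rfl fun i hi => ?_
        rw [if_neg (show i ≠ b by rintro rfl; exact hb hi)]; ring
      rw [h2, ht, h1, Nat.gcd_eq_gcd_ab (f b) (s.gcd f)]
      simp only [if_true]
      ring

/-- Divisibility direction of Theorem 2.5: in the quotient group with generators
`η₁,…,η_n`, relations `(mᵢk)ηᵢ − (m_nk)η_n = 0` and `∑ ηᵢ = 0`, if `N` kills the class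
of `(m_nk)η_n`, then `∑ᵢ m/mᵢ` divides `N`, where `m = lcm(m₁,…,m_n)`. -/
theorem stmt9 (n : ℕ) (hn : 0 < n) (k : ℕ) (hk : 0 < k)
    (m : Fin n → ℕ) (hm : ∀ i, 0 < m i) (N : ℕ)
    (hN : (N : ℤ) •
        ((Submodule.Quotient.mk
            (((m (⟨n - 1, by omega⟩ : Fin n) * k : ℕ) : ℤ) •
              Pi.single (⟨n - 1, by omega⟩ : Fin n) (1 : ℤ))) :
          (Fin n → ℤ) ⧸
            Submodule.span ℤ
              ({v | ∃ i : Fin n,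
                  v = ((m i * k : ℕ) : ℤ) • Pi.single i (1 : ℤ) -
                      ((m (⟨n - 1, by omega⟩ : Fin n) * k : ℕ) : ℤ) •
                        Pi.single (⟨n - 1, by omega⟩ : Fin n) (1 : ℤ)} ∪
                {fun _ => (1 : ℤ)})) = 0) :
    (∑ i : Fin n, Finset.univ.lcm m / m i) ∣ N := by
  classical
  set j : Fin n := ⟨n - 1, by omega⟩ with hj
  set L : ℕ := Finset.univ.lcm m with hL
  have hdvd : ∀ i, m i ∣ L := fun i => Finset.dvd_lcm (Finset.mem_univ i)
  have hLpos : 0 < L :=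
    Nat.pos_of_dvd_of_pos
      (Finset.lcm_dvd fun i _ => Finset.dvd_prod_of_mem m (Finset.mem_univ i))
      (show 0 < ∏ i : Fin n, m i from Finset.prod_pos fun i _ => hm i)
  set a : Fin n → ℕ := fun i => L / m i with ha
  have hma : ∀ i, m i * a i = L := fun i => Nat.mul_div_cancel' (hdvd i)
  -- gcd of the a i is 1
  have hgcd : Finset.univ.gcd a = 1 := by
    set g := Finset.univ.gcd a with hg
    have hgdvd : ∀ i, g ∣ a i := fun i => Finset.gcd_dvd (Finset.mem_univ i)
    have haL : ∀ i, a i ∣ L := fun i => ⟨m i, by rw [← hma i]; ring⟩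
    have hgL : g ∣ L := (hgdvd ⟨0, hn⟩).trans (haL ⟨0, hn⟩)
    have hLdvd : L ∣ L / g := by
      apply Finset.lcm_dvd
      intro i _
      rw [Nat.dvd_div_iff_mul_dvd hgL, mul_comm]
      exact (mul_dvd_mul_left (m i) (hgdvd i)).trans (dvd_of_eq (hma i))
    have heq : L / g = L := Nat.dvd_antisymm (Nat.div_dvd_of_dvd hgL) hLdvd
    have : g * L = 1 * L := by
      rw [one_mul]
      conv_rhs => rw [← Nat.mul_div_cancel' hgL, heq]
    exact Nat.eq_of_mul_eq_mul_right hLpos this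
  set S : ℕ := ∑ i, a i with hS
  obtain ⟨t, ht⟩ := bezout_finset Finset.univ a
  rw [hgcd] at ht
  set c : Fin n → ℤ := fun i => (a i : ℤ) * (1 - (S : ℤ) * t i) with hc
  set f : (Fin n → ℤ) →ₗ[ℤ] ℤ :=
    ∑ i : Fin n, c i • (LinearMap.proj i : (Fin n → ℤ) →ₗ[ℤ] ℤ) with hfdef
  have hfsingle : ∀ i, f (Pi.single i (1 : ℤ)) = c i := by
    intro i
    simp [hfdef, LinearMap.sum_apply, LinearMap.smul_apply, LinearMap.proj_apply,
      Pi.single_apply, smul_eq_mul, mul_ite, mul_one, mul_zero]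
  have hfone : f (fun _ => (1 : ℤ)) = 0 := by
    have h1 : f (fun _ => (1 : ℤ)) = ∑ i, c i := by
      simp [hfdef, LinearMap.sum_apply, LinearMap.smul_apply, LinearMap.proj_apply,
        smul_eq_mul, mul_one]
    rw [h1]
    have h2 : ∑ i, c i = (∑ i, (a i : ℤ)) - (S : ℤ) * ∑ i, t i * (a i : ℤ) := by
      rw [Finset.mul_sum, ← Finset.sum_sub_distrib]
      exact Finset.sum_congr rfl fun i _ => by rw [hc]; ring
    rw [h2, ht, hS, Nat.cast_sum]
    ring
  -- the span is contained in the kernel of (f mod S*L*k)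
  have hspan : Submodule.span ℤ
      ({v | ∃ i : Fin n,
          v = ((m i * k : ℕ) : ℤ) • Pi.single i (1 : ℤ) -
              ((m j * k : ℕ) : ℤ) • Pi.single j (1 : ℤ)} ∪
        {fun _ => (1 : ℤ)}) ≤
      Submodule.comap f (Ideal.span {((S : ℤ) * L * k)}) := by
    rw [Submodule.span_le]
    rintro v (⟨i, rfl⟩ | hv)
    · simp only [Submodule.mem_comap, SetLike.mem_coe, Ideal.mem_span_singleton]
      rw [map_sub, map_smul, map_smul, hfsingle, hfsingle, smul_eq_mul, smul_eq_mul]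
      refine ⟨t j - t i, ?_⟩
      have e1 : (m i : ℤ) * (a i : ℤ) = (L : ℤ) := by exact_mod_cast congrArg Nat.cast (hma i)
      have e2 : (m j : ℤ) * (a j : ℤ) = (L : ℤ) := by exact_mod_cast congrArg Nat.cast (hma j)
      rw [hc]
      push_cast
      linear_combination ((k : ℤ) * (1 - (S : ℤ) * t i)) * e1 -
        ((k : ℤ) * (1 - (S : ℤ) * t j)) * e2
    · simp only [Set.mem_singleton_iff] at hv
      subst hv
      simp only [Submodule.mem_comap, SetLike.mem_coe, Ideal.mem_span_singleton, hfone]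
      exact dvd_zero _
  -- extract the membership from hN
  rw [← Submodule.Quotient.mk_smul] at hN
  have hmemP := (Submodule.Quotient.mk_eq_zero _).mp hN
  have hval : ((S : ℤ) * L * k) ∣ f ((N : ℤ) • (((m j * k : ℕ) : ℤ) • Pi.single j (1 : ℤ))) :=
    Ideal.mem_span_singleton.mp (Submodule.mem_comap.mp (hspan hmemP))
  have e2 : (m j : ℤ) * (a j : ℤ) = (L : ℤ) := by exact_mod_cast congrArg Nat.cast (hma j)
  have hfval : f ((N : ℤ) • (((m j * k : ℕ) : ℤ) • Pi.single j (1 : ℤ)))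
      = (N : ℤ) * ((L : ℤ) * (k : ℤ) * (1 - (S : ℤ) * t j)) := by
    rw [map_smul, map_smul, hfsingle, smul_eq_mul, smul_eq_mul, hc]
    push_cast
    linear_combination (N : ℤ) * (k : ℤ) * (1 - (S : ℤ) * t j) * e2
  rw [hfval] at hval
  have hLk0 : ((L : ℤ) * (k : ℤ)) ≠ 0 := by positivity
  have h1 : ((L : ℤ) * k) * (S : ℤ) ∣ ((L : ℤ) * k) * ((N : ℤ) * (1 - (S : ℤ) * t j)) := by
    obtain ⟨q, hq⟩ := hval
    exact ⟨q, by linear_combination hq⟩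
  have h2 : (S : ℤ) ∣ (N : ℤ) * (1 - (S : ℤ) * t j) := (mul_dvd_mul_iff_left hLk0).mp h1
  have h3 : (S : ℤ) ∣ (N : ℤ) := by
    have hNe : (N : ℤ) = (N : ℤ) * (1 - (S : ℤ) * t j) + (S : ℤ) * ((N : ℤ) * t j) := by ring
    rw [hNe]
    exact dvd_add h2 (Dvd.intro _ rfl)
  exact_mod_cast h3
end
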